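/- Let γ₁ = (0 1; -1 1) and γ₂ = (1 -1; 1 0) in SL(2,ℤ), let F = {τ ∈ ℍ : 0 ≤ Re τ ≤ 1, |τ| ≥ 1, |τ-1| > 1} ∪ {e^{πi/3}}, and let F₀ = {τ ∈ ℍ : 0 ≤ Re τ ≤ 1, |τ - 1/2| ≥ 1/2}. Then F₀ = F ∪ γ₁(F) ∪ γ₂(F), where γ·τ = (aτ+b)/(cτ+d). -/

import Mathlib

noncomputable section
open scoped Real
open Complex

/-- The fundamental domain `F` of `SL(2,ℤ)`:
`{τ ∈ ℍ : 0 ≤ Re τ ≤ 1, |τ| ≥ 1, |τ-1| > 1} ∪ {e^{πi/3}}`. -/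
def Fdom : Set ℂ :=
  {τ : ℂ | 0 < τ.im ∧ 0 ≤ τ.re ∧ τ.re ≤ 1 ∧ 1 ≤ ‖τ‖ ∧ 1 < ‖τ - 1‖} ∪
    {Complex.exp ((π : ℂ) * Complex.I / 3)}

/-- The basic fundamental domain `F₀` of `Γ₀(2)`:
`{τ ∈ ℍ : 0 ≤ Re τ ≤ 1, |τ - 1/2| ≥ 1/2}`. -/
def F0dom : Set ℂ :=
  {τ : ℂ | 0 < τ.im ∧ 0 ≤ τ.re ∧ τ.re ≤ 1 ∧ 1 / 2 ≤ ‖τ - 1 / 2‖}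

/-! In the coordinates `x = Re τ`, `n = |τ|²` every set involved is cut out by inequalities
linear in `x` and `n`. The maps `γ₁ τ = 1/(1-τ)` and `γ₂ τ = (τ-1)/τ` are mutually inverse
bijections of `ℍ`, so `γ₁(F)` is the set of `τ ∈ ℍ` with `γ₂ τ ∈ F` and vice versa; since
`Re (γ₂ τ) = (n - x)/n` and `|γ₂ τ|² = (n - 2x + 1)/n` (and similarly for `γ₁`), these are again
linear conditions after clearing the positive denominator. Inside the half-strip `{τ ∈ ℍ : 0 ≤ x ≤ 1}`,
`F₀ = {x ≤ n}` is then the union of `F ∖ {ρ} = {1 ≤ n, 2x < n}`, `γ₁(F ∖ {ρ}) = {2x ≤ 1, x ≤ n < 1}`,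
`γ₂(F ∖ {ρ}) = {1 < 2x, x ≤ n ≤ 2x}` and the common fixed point `ρ = e^{πi/3}` (`x = 1/2`, `n = 1`). -/

open Set

theorem Set.InvOn.image_eq_preimage_inter {α β : Type*} {f : α → β} {g : β → α} {s : Set α}
    {u : Set β} {t : Set α} (h : InvOn g f s u) (hf : MapsTo f s u) (hg : MapsTo g u s)
    (ht : t ⊆ s) : f '' t = g ⁻¹' t ∩ u := by
  simpa only [inter_eq_left.2 ht, (h.bijOn hf hg).image_eq] using h.1.image_inter' (s₁ := t)

abbrev γ₁ : ℂ → ℂ := fun τ => 1 / (1 - τ)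

abbrev γ₂ : ℂ → ℂ := fun τ => (τ - 1) / τ

def rho : ℂ := 1 / 2 + (√3 / 2 : ℝ) * I

lemma rho_re : rho.re = 1 / 2 := by simp [rho]

lemma rho_im : rho.im = √3 / 2 := by simp [rho]

lemma exp_pi_mul_I_div_three : exp (π * I / 3) = rho := by
  rw [show (π : ℂ) * I / 3 = (π / 3 : ℝ) * I by push_cast; ring, exp_mul_I, ← ofReal_cos,
    ← ofReal_sin, Real.cos_pi_div_three, Real.sin_pi_div_three, rho]
  push_cast
  ring

lemma eq_rho_iff (z : ℂ) : z = rho ↔ 0 < z.im ∧ z.re = 1 / 2 ∧ normSq z = 1 := by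
  have h3 : √3 ^ 2 = 3 := Real.sq_sqrt (by norm_num)
  constructor
  · rintro rfl
    refine ⟨by rw [rho_im]; positivity, rho_re, ?_⟩
    rw [normSq_apply, rho_re, rho_im]
    nlinarith
  · rintro ⟨him, hre, hn⟩
    rw [normSq_apply, hre] at hn
    have him_sq : z.im ^ 2 = (√3 / 2) ^ 2 := by rw [div_pow, h3]; linarith
    refine Complex.ext (by rw [hre, rho_re]) ?_
    rw [rho_im, ← pow_left_inj₀ him.le (by positivity) two_ne_zero, him_sq]

lemma rho_sq : rho ^ 2 = rho - 1 := by
  have h3 : √3 ^ 2 = 3 := Real.sq_sqrt (by norm_num)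
  apply Complex.ext <;>
    simp only [pow_two, mul_re, mul_im, sub_re, sub_im, one_re, one_im, rho_re, rho_im] <;>
    nlinarith

lemma ne_zero_of_im_ne_zero {z : ℂ} (hz : z.im ≠ 0) : z ≠ 0 :=
  fun h => hz (by simp [h])

lemma γ₁_rho : γ₁ rho = rho := by
  rw [div_eq_iff (ne_zero_of_im_ne_zero (by simp [rho_im]))]
  linear_combination rho_sq

lemma γ₂_rho : γ₂ rho = rho := by
  rw [div_eq_iff (ne_zero_of_im_ne_zero (by simp [rho_im]))]
  linear_combination -rho_sq

lemma γ₁_re (z : ℂ) : (γ₁ z).re = (1 - z.re) / normSq (1 - z) := by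
  simp [one_div, inv_re]

lemma γ₁_im (z : ℂ) : (γ₁ z).im = z.im / normSq (1 - z) := by
  simp [one_div, inv_im]

lemma normSq_γ₁ (z : ℂ) : normSq (γ₁ z) = 1 / normSq (1 - z) := by
  simp

lemma γ₂_re (z : ℂ) : (γ₂ z).re = (normSq z - z.re) / normSq z := by
  simp only [div_re, sub_re, sub_im, one_re, one_im, normSq_apply]
  ring

lemma γ₂_im (z : ℂ) : (γ₂ z).im = z.im / normSq z := by
  simp only [div_im, sub_re, sub_im, one_re, one_im]
  ring

lemma normSq_γ₂ (z : ℂ) : normSq (γ₂ z) = normSq (z - 1) / normSq z :=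
  map_div₀ normSq _ _

lemma normSq_sub_one (z : ℂ) : normSq (z - 1) = normSq z - 2 * z.re + 1 := by
  simp only [normSq_apply, sub_re, sub_im, one_re, one_im]
  ring

lemma normSq_one_sub (z : ℂ) : normSq (1 - z) = normSq z - 2 * z.re + 1 := by
  rw [← normSq_neg, neg_sub, normSq_sub_one]

lemma ne_zero_of_im_pos {z : ℂ} (hz : 0 < z.im) : z ≠ 0 := ne_zero_of_im_ne_zero hz.ne'

lemma one_sub_ne_zero_of_im_pos {z : ℂ} (hz : 0 < z.im) : 1 - z ≠ 0 :=
  ne_zero_of_im_ne_zero (by simpa using hz.ne')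

lemma mapsTo_γ₁ : MapsTo γ₁ {z | 0 < z.im} {z | 0 < z.im} := fun z (hz : 0 < z.im) => by
  simpa only [mem_ofPred_eq, γ₁_im] using
    div_pos hz (normSq_pos.2 (one_sub_ne_zero_of_im_pos hz))

lemma mapsTo_γ₂ : MapsTo γ₂ {z | 0 < z.im} {z | 0 < z.im} := fun z (hz : 0 < z.im) => by
  simpa only [mem_ofPred_eq, γ₂_im] using div_pos hz (normSq_pos.2 (ne_zero_of_im_pos hz))

lemma invOn_γ₂_γ₁ : InvOn γ₂ γ₁ {z | 0 < z.im} {z | 0 < z.im} := by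
  constructor
  · intro z (hz : 0 < z.im)
    have := one_sub_ne_zero_of_im_pos hz
    field_simp
    ring
  · intro z (hz : 0 < z.im)
    have := ne_zero_of_im_pos hz
    field_simp
    ring

def fdomCore : Set ℂ :=
  {τ | 0 < τ.im ∧ 0 ≤ τ.re ∧ τ.re ≤ 1 ∧ 1 ≤ normSq τ ∧ 2 * τ.re < normSq τ}

lemma Fdom_eq : Fdom = fdomCore ∪ {rho} := by
  ext z
  simp only [Fdom, fdomCore, exp_pi_mul_I_div_three, mem_union, mem_ofPred_eq, mem_singleton_iff,
    ← one_le_sq_iff₀ (norm_nonneg _), ← one_lt_sq_iff₀ (norm_nonneg _), ← normSq_eq_norm_sq,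
    normSq_sub_one]
  constructor <;> rintro (⟨h₁, h₂, h₃, h₄, h₅⟩ | h)
  all_goals first
    | exact .inr h
    | exact .inl ⟨h₁, h₂, h₃, h₄, by linarith⟩

lemma mem_F0dom_iff (z : ℂ) :
    z ∈ F0dom ↔ 0 < z.im ∧ 0 ≤ z.re ∧ z.re ≤ 1 ∧ z.re ≤ normSq z := by
  have h : normSq (z - 1 / 2) = normSq z - z.re + 1 / 4 := by
    simp only [normSq_apply, sub_re, sub_im, div_re, div_im, one_re, one_im]
    norm_num
    ring
  rw [F0dom, mem_ofPred_eq, ← sq_le_sq₀ (by norm_num) (norm_nonneg _), ← normSq_eq_norm_sq, h]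
  constructor <;> rintro ⟨h₁, h₂, h₃, h₄⟩ <;> exact ⟨h₁, h₂, h₃, by linarith⟩

lemma image_γ₁_fdomCore :
    γ₁ '' fdomCore =
      {z | 0 < z.im ∧ 0 ≤ z.re ∧ 2 * z.re ≤ 1 ∧ z.re ≤ normSq z ∧ normSq z < 1} := by
  rw [invOn_γ₂_γ₁.image_eq_preimage_inter mapsTo_γ₁ mapsTo_γ₂ fun z hz => hz.1]
  ext z
  by_cases hz : 0 < z.im
  swap
  · simp [hz]
  have hn := normSq_pos.2 (ne_zero_of_im_pos hz)
  simp only [fdomCore, mem_inter_iff, mem_preimage, mem_ofPred_eq, γ₂_re, γ₂_im, normSq_γ₂,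
    normSq_sub_one, div_pos_iff_of_pos_right hn, le_div_iff₀ hn, div_le_one₀ hn,
    mul_div_assoc', div_lt_div_iff_of_pos_right hn, zero_mul, hz, true_and, and_true]
  constructor <;> rintro ⟨h₁, h₂, h₃, h₄⟩ <;> refine ⟨?_, ?_, ?_, ?_⟩ <;> linarith

lemma image_γ₂_fdomCore :
    γ₂ '' fdomCore =
      {z | 0 < z.im ∧ 1 < 2 * z.re ∧ z.re ≤ 1 ∧ z.re ≤ normSq z ∧ normSq z ≤ 2 * z.re} := by
  rw [invOn_γ₂_γ₁.symm.image_eq_preimage_inter mapsTo_γ₂ mapsTo_γ₁ fun z hz => hz.1]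
  ext z
  by_cases hz : 0 < z.im
  swap
  · simp [hz]
  have hm := normSq_pos.2 (one_sub_ne_zero_of_im_pos hz)
  simp only [fdomCore, mem_inter_iff, mem_preimage, mem_ofPred_eq, γ₁_re, γ₁_im, normSq_γ₁,
    div_pos_iff_of_pos_right hm, le_div_iff₀ hm, div_le_one₀ hm, mul_div_assoc',
    div_lt_div_iff_of_pos_right hm, zero_mul, hz, true_and, and_true]
  rw [normSq_one_sub]
  constructor <;> rintro ⟨h₁, h₂, h₃, h₄⟩ <;> refine ⟨?_, ?_, ?_, ?_⟩ <;> linarith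

lemma F0dom_eq_union : F0dom = fdomCore ∪ γ₁ '' fdomCore ∪ γ₂ '' fdomCore ∪ {rho} := by
  ext z
  rw [image_γ₁_fdomCore, image_γ₂_fdomCore]
  simp only [mem_F0dom_iff, fdomCore, mem_union, mem_ofPred_eq, mem_singleton_iff, eq_rho_iff]
  constructor
  · rintro ⟨hy, hx₀, hx₁, hxn⟩
    by_cases hcore : 1 ≤ normSq z ∧ 2 * z.re < normSq z
    · exact .inl <| .inl <| .inl ⟨hy, hx₀, hx₁, hcore⟩
    rw [not_and_or, not_le, not_lt] at hcore
    rcases le_or_gt (2 * z.re) 1 with hx | hx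
    · rcases lt_or_ge (normSq z) 1 with hn | hn
      · exact .inl <| .inl <| .inr ⟨hy, hx₀, hx, hxn, hn⟩
      · exact .inr ⟨hy, by grind, by grind⟩
    · exact .inl <| .inr ⟨hy, hx, hx₁, hxn, by grind⟩
  · rintro (((⟨hy, hx₀, hx₁, hn, -⟩ | ⟨hy, hx₀, hx, hxn, -⟩) | ⟨hy, hx, hx₁, hxn, -⟩) | ⟨hy, hx, hn⟩)
    all_goals refine ⟨hy, ?_, ?_, ?_⟩ <;> linarith

/-- `F₀ = F ∪ γ₁(F) ∪ γ₂(F)`, where `γ₁ = (0 1; -1 1)` acts by `τ ↦ 1/(1-τ)` and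
`γ₂ = (1 -1; 1 0)` acts by `τ ↦ (τ-1)/τ`. -/
theorem stmt_16 :
    F0dom = Fdom ∪ (fun τ : ℂ => 1 / (1 - τ)) '' Fdom ∪ (fun τ : ℂ => (τ - 1) / τ) '' Fdom := by
  change F0dom = Fdom ∪ γ₁ '' Fdom ∪ γ₂ '' Fdom
  rw [F0dom_eq_union, Fdom_eq, image_union, image_union, image_singleton, image_singleton, γ₁_rho,
    γ₂_rho]
  ext z
  simp only [mem_union]
  tauto
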